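/- f(3) = 3 and d(3) = 6: the minimum number of fragments in a fragment tiling of the 3 × 3 board S₃ is 3, and the maximum number of dominoes in a saturated domino covering of S₃ is 6. -/

import Mathlib

/-- A cell of the square grid. -/
abbrev Cell : Type := ℤ × ℤ

/-- Two cells are adjacent iff they differ by 1 in exactly one coordinate. -/
def Adj (p q : Cell) : Prop := |p.1 - q.1| + |p.2 - q.2| = 1

/-- A board: a finite nonempty set of cells, each adjacent to another cell of the board. -/
def IsBoard (B : Set Cell) : Prop :=
  B.Finite ∧ B.Nonempty ∧ ∀ p ∈ B, ∃ q ∈ B, Adj p q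

/-- A domino of `B`: a two-element subset of `B` whose cells are adjacent. -/
def IsDomino (B : Set Cell) (e : Finset Cell) : Prop :=
  ∃ p q : Cell, p ∈ B ∧ q ∈ B ∧ Adj p q ∧ e = {p, q}

/-- A domino covering of `B`: a finite set of dominoes of `B` whose union is `B`. -/
def IsDominoCovering (B : Set Cell) (D : Finset (Finset Cell)) : Prop :=
  (∀ e ∈ D, IsDomino B e) ∧ (⋃ e ∈ D, (↑e : Set Cell)) = B

/-- A saturated domino covering: removing any domino leaves some cell uncovered. -/
def IsSaturatedCovering (B : Set Cell) (D : Finset (Finset Cell)) : Prop :=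
  IsDominoCovering B D ∧ ∀ e ∈ D, (⋃ e' ∈ D.erase e, (↑e' : Set Cell)) ⊂ B

/-- `dNum B` is the maximum number of dominoes in a saturated domino covering of `B`. -/
noncomputable def dNum (B : Set Cell) : ℕ :=
  sSup {k : ℕ | ∃ D : Finset (Finset Cell), IsSaturatedCovering B D ∧ D.card = k}

/-- The X-pentomino centered at `c`: the cell `c` together with its four adjacent cells. -/
def Xpent (c : Cell) : Set Cell :=
  {c, (c.1 + 1, c.2), (c.1 - 1, c.2), (c.1, c.2 + 1), (c.1, c.2 - 1)}

/-- A set of cells is connected under adjacency. -/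
def ConnectedUnderAdj (F : Set Cell) : Prop :=
  ∀ p ∈ F, ∀ q ∈ F, Relation.ReflTransGen (fun a b => a ∈ F ∧ b ∈ F ∧ Adj a b) p q

/-- A fragment: a connected subset of some X-pentomino with at least two cells. -/
def IsFragment (F : Set Cell) : Prop :=
  (∃ c : Cell, F ⊆ Xpent c) ∧ 2 ≤ F.ncard ∧ ConnectedUnderAdj F

/-- A fragment tiling of `B`: a partition of `B` into pairwise disjoint fragments. -/
def IsFragmentTiling (B : Set Cell) (T : Finset (Set Cell)) : Prop :=
  (∀ F ∈ T, IsFragment F) ∧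
  (∀ F ∈ T, ∀ G ∈ T, F ≠ G → Disjoint F G) ∧
  (⋃ F ∈ T, F) = B

/-- `fNum B` is the minimum number of fragments in a fragment tiling of `B`. -/
noncomputable def fNum (B : Set Cell) : ℕ :=
  sInf {k : ℕ | ∃ T : Finset (Set Cell), IsFragmentTiling B T ∧ T.card = k}

/-- `xNum B` is the minimum number of X-pentominoes (centered anywhere, allowed to
overlap and to extend outside `B`) whose union covers `B`. -/
noncomputable def xNum (B : Set Cell) : ℕ :=
  sInf {k : ℕ | ∃ C : Finset Cell, B ⊆ (⋃ c ∈ C, Xpent c) ∧ C.card = k}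

/-- The `n × n` board `{0, …, n-1} × {0, …, n-1}`. -/
def Sq (n : ℕ) : Set Cell := {p : Cell | 0 ≤ p.1 ∧ p.1 < n ∧ 0 ≤ p.2 ∧ p.2 < n}

/-!
Every fragment lies in an X-pentomino, so `f(B) ≥ x(B)`, where `x(B)` is the least number of
X-pentominoes covering `B`. In a saturated covering every domino has a private cell, covered by
no other domino; choosing one per domino, each domino keeps its other cell unchosen, so the
unchosen cells dominate the board and `d(B) + x(B) ≤ |B|`. For the 3 × 3 board `x = 3`: moving
a centre into the board loses no board cell, and a finite check shows that two pentominoes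
centred on the board never cover it. The three rows and a pinwheel of six dominoes attain
both bounds.
-/

lemma Finset.exists_subset_pair_of_card_le_two {α : Type*} [DecidableEq α] [Nonempty α]
    {s : Finset α} (h : s.card ≤ 2) : ∃ a b, s ⊆ {a, b} := by
  obtain rfl | ⟨a, ha⟩ := s.eq_empty_or_nonempty
  · exact ⟨Classical.arbitrary α, Classical.arbitrary α, Finset.empty_subset _⟩
  obtain ⟨b, hb⟩ := Finset.card_le_one_iff_subset_singleton.1
    (by rw [Finset.card_erase_of_mem ha]; omega : (s.erase a).card ≤ 1)
  exact ⟨a, b, Finset.insert_erase ha ▸ Finset.insert_subset_insert a hb⟩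

lemma Adj.symm {p q : Cell} (h : Adj p q) : Adj q p := by
  rwa [Adj, abs_sub_comm q.1, abs_sub_comm q.2]

lemma Adj.ne {p q : Cell} (h : Adj p q) : p ≠ q := by
  rintro rfl
  simp [Adj] at h

lemma mem_xpent_iff {p c : Cell} : p ∈ Xpent c ↔ |p.1 - c.1| + |p.2 - c.2| ≤ 1 := by
  obtain ⟨a, b⟩ := p
  obtain ⟨x, y⟩ := c
  simp only [Xpent, Set.mem_insert_iff, Set.mem_singleton_iff, Prod.mk.injEq, abs_eq_max_neg]
  omega

instance (p c : Cell) : Decidable (p ∈ Xpent c) :=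
  decidable_of_iff _ mem_xpent_iff.symm

lemma self_mem_xpent (c : Cell) : c ∈ Xpent c := by
  simp [Xpent]

lemma Adj.mem_xpent {p c : Cell} (h : Adj p c) : p ∈ Xpent c :=
  mem_xpent_iff.2 h.le

lemma IsDomino.subset_xpent {B : Set Cell} {e : Finset Cell} (he : IsDomino B e) {c : Cell}
    (hc : c ∈ e) : (e : Set Cell) ⊆ Xpent c := by
  obtain ⟨p, q, -, -, hpq, rfl⟩ := he
  simp only [Finset.mem_insert, Finset.mem_singleton] at hc
  rcases hc with rfl | rfl <;> intro r hr <;>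
    simp only [Finset.coe_insert, Finset.coe_singleton, Set.mem_insert_iff,
      Set.mem_singleton_iff] at hr <;> rcases hr with rfl | rfl
  exacts [self_mem_xpent _, hpq.symm.mem_xpent, hpq.mem_xpent, self_mem_xpent _]

lemma IsDomino.one_lt_card {B : Set Cell} {e : Finset Cell} (he : IsDomino B e) :
    1 < e.card := by
  obtain ⟨p, q, -, -, hpq, rfl⟩ := he
  simp [Finset.card_pair hpq.ne]

def clampSq (n : ℕ) (c : Cell) : Cell :=
  (max 0 (min ((n : ℤ) - 1) c.1), max 0 (min ((n : ℤ) - 1) c.2))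

lemma clampSq_mem (n : ℕ) (hn : 1 ≤ n) (c : Cell) : clampSq n c ∈ Sq n := by
  simp only [clampSq, Sq, Set.mem_ofPred_eq]
  omega

lemma mem_xpent_clampSq {n : ℕ} {p c : Cell} (hp : p ∈ Sq n) (h : p ∈ Xpent c) :
    p ∈ Xpent (clampSq n c) := by
  simp only [Sq, Set.mem_ofPred_eq] at hp
  rw [mem_xpent_iff] at h ⊢
  simp only [clampSq, abs_eq_max_neg] at h ⊢
  omega

lemma connectedUnderAdj_of_forall_adj {F : Set Cell} {m : Cell} (hm : m ∈ F)
    (h : ∀ p ∈ F, p ≠ m → Adj p m) : ConnectedUnderAdj F := by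
  have via_m : ∀ p ∈ F, Relation.ReflTransGen (fun a b => a ∈ F ∧ b ∈ F ∧ Adj a b) p m ∧
      Relation.ReflTransGen (fun a b => a ∈ F ∧ b ∈ F ∧ Adj a b) m p := by
    intro p hp
    by_cases hpm : p = m
    · exact hpm ▸ ⟨.refl, .refl⟩
    · exact ⟨.single ⟨hp, hm, h p hp hpm⟩, .single ⟨hm, hp, (h p hp hpm).symm⟩⟩
  exact fun p hp q hq => (via_m p hp).1.trans (via_m q hq).2

lemma xNum_le_card_of_subset {B : Set Cell} {C : Finset Cell} (h : B ⊆ ⋃ c ∈ C, Xpent c) :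
    xNum B ≤ C.card :=
  Nat.sInf_le ⟨C, h, rfl⟩

lemma IsFragmentTiling.xNum_le_card {B : Set Cell} {T : Finset (Set Cell)}
    (hT : IsFragmentTiling B T) : xNum B ≤ T.card := by
  classical
  choose center hcenter using fun F (hF : F ∈ T) => (hT.1 F hF).1
  refine (xNum_le_card_of_subset (C := T.attach.image fun F => center F.1 F.2) ?_).trans
    (Finset.card_image_le.trans T.card_attach.le)
  rw [← hT.2.2]
  refine Set.iUnion₂_subset fun F hF => (hcenter F hF).trans ?_
  exact Set.subset_biUnion_of_mem (Finset.mem_image_of_mem _ (Finset.mem_attach _ ⟨F, hF⟩))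

lemma IsSaturatedCovering.exists_private {B : Set Cell} {D : Finset (Finset Cell)}
    (h : IsSaturatedCovering B D) {e : Finset Cell} (he : e ∈ D) :
    ∃ p ∈ e, ∀ e' ∈ D, p ∈ e' → e' = e := by
  obtain ⟨p, hpB, hp⟩ := Set.exists_of_ssubset (h.2 e he)
  have hunique : ∀ e' ∈ D, p ∈ e' → e' = e := fun e' he' hpe' => by
    by_contra hne
    exact hp (Set.mem_iUnion₂.2 ⟨e', Finset.mem_erase.2 ⟨hne, he'⟩, hpe'⟩)
  rw [← h.1.2] at hpB
  obtain ⟨e', he', hpe'⟩ := Set.mem_iUnion₂.1 hpB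
  exact ⟨p, hunique e' he' hpe' ▸ hpe', hunique⟩

lemma IsDominoCovering.xNum_le_card_sdiff {B P : Finset Cell} {D : Finset (Finset Cell)}
    (h : IsDominoCovering B D) (hP : ∀ e ∈ D, ¬ e ⊆ P) : xNum B ≤ (B \ P).card := by
  refine xNum_le_card_of_subset fun q hq => ?_
  rw [← h.2] at hq
  obtain ⟨e, he, hqe⟩ := Set.mem_iUnion₂.1 hq
  obtain ⟨c, hce, hcP⟩ := Finset.not_subset.1 (hP e he)
  have hcB : c ∈ B := Finset.mem_coe.1 (h.2 ▸ Set.mem_iUnion₂.2 ⟨e, he, hce⟩)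
  exact Set.mem_iUnion₂.2 ⟨c, Finset.mem_sdiff.2 ⟨hcB, hcP⟩, (h.1 e he).subset_xpent hce hqe⟩

lemma IsSaturatedCovering.card_add_xNum_le {B : Finset Cell} {D : Finset (Finset Cell)}
    (h : IsSaturatedCovering B D) : D.card + xNum B ≤ B.card := by
  classical
  choose priv hpriv_mem hpriv_unique using fun e (he : e ∈ D) => h.exists_private he
  set P := D.attach.image fun e => priv e.1 e.2
  have hinj : Function.Injective fun e : D => priv e.1 e.2 := by
    intro e₁ e₂ (heq : priv e₁.1 e₁.2 = priv e₂.1 e₂.2)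
    exact Subtype.ext (hpriv_unique e₂.1 e₂.2 e₁.1 e₁.2 (heq ▸ hpriv_mem e₁.1 e₁.2))
  have hPB : P ⊆ B := by
    simp only [P, Finset.image_subset_iff]
    intro e _
    rw [← Finset.mem_coe, ← h.1.2]
    exact Set.mem_iUnion₂.2 ⟨e.1, e.2, hpriv_mem e.1 e.2⟩
  have hP : ∀ e ∈ D, ¬ e ⊆ P := by
    intro e he heP
    have : e ⊆ {priv e he} := by
      intro p hp
      obtain ⟨⟨e', he'⟩, -, rfl⟩ := Finset.mem_image.1 (heP hp)
      obtain rfl := hpriv_unique e' he' e he hp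
      exact Finset.mem_singleton_self _
    simpa using (h.1.1 e he).one_lt_card.trans_le (Finset.card_le_card this)
  have hPcard : P.card = D.card := by
    rw [Finset.card_image_of_injective _ hinj, Finset.card_attach]
  have hxNum := h.1.xNum_le_card_sdiff hP
  rw [Finset.card_sdiff_of_subset hPB, hPcard] at hxNum
  have := hPcard ▸ Finset.card_le_card hPB
  omega

def sq3 : Finset Cell := {(0,0), (1,0), (2,0), (0,1), (1,1), (2,1), (0,2), (1,2), (2,2)}

lemma coe_sq3 : (sq3 : Set Cell) = Sq 3 := by
  ext ⟨x, y⟩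
  simp only [sq3, Finset.coe_insert, Finset.coe_singleton, Set.mem_insert_iff,
    Set.mem_singleton_iff, Prod.mk.injEq, Sq, Set.mem_ofPred_eq]
  omega

lemma sq_three_not_subset_xpent_union (a b : Cell) : ¬ Sq 3 ⊆ Xpent a ∪ Xpent b := by
  intro h
  have hclamp (c : Cell) : clampSq 3 c ∈ sq3 := by
    rw [← Finset.mem_coe, coe_sq3]
    exact clampSq_mem 3 (by norm_num) c
  have key : ∀ a ∈ sq3, ∀ b ∈ sq3, ∃ p ∈ sq3, p ∉ Xpent a ∧ p ∉ Xpent b := by decide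
  obtain ⟨p, hp, hpa, hpb⟩ := key _ (hclamp a) _ (hclamp b)
  have hpS : p ∈ Sq 3 := coe_sq3 ▸ Finset.mem_coe.2 hp
  rcases h hpS with hp' | hp'
  exacts [hpa (mem_xpent_clampSq hpS hp'), hpb (mem_xpent_clampSq hpS hp')]

lemma three_le_card_of_sq_three_subset {C : Finset Cell} (h : Sq 3 ⊆ ⋃ c ∈ C, Xpent c) :
    3 ≤ C.card := by
  by_contra! hC
  obtain ⟨a, b, hab⟩ := Finset.exists_subset_pair_of_card_le_two (by omega : C.card ≤ 2)
  refine sq_three_not_subset_xpent_union a b (h.trans (Set.iUnion₂_subset fun c hc => ?_))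
  rcases Finset.mem_insert.1 (hab hc) with rfl | hc
  · exact Set.subset_union_left
  · exact Finset.mem_singleton.1 hc ▸ Set.subset_union_right

lemma xNum_sq_three : xNum (Sq 3) = 3 := by
  refine IsLeast.csInf_eq ⟨⟨{(1,0), (1,1), (1,2)}, ?_, rfl⟩, ?_⟩
  · have cover : ∀ p ∈ sq3, ∃ c ∈ ({(1,0), (1,1), (1,2)} : Finset Cell), p ∈ Xpent c := by
      decide
    intro p hp
    obtain ⟨c, hc, hpc⟩ := cover p (Finset.mem_coe.1 (coe_sq3 ▸ hp))
    exact Set.mem_iUnion₂.2 ⟨c, hc, hpc⟩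
  · rintro k ⟨C, hC, rfl⟩
    exact three_le_card_of_sq_three_subset hC

def row (y : ℤ) : Set Cell := {(0, y), (1, y), (2, y)}

lemma row_injective : Function.Injective row := by
  intro y y' h
  have : ((0 : ℤ), y) ∈ row y' := h ▸ by simp [row]
  simpa [row] using this

lemma isFragment_row (y : ℤ) : IsFragment (row y) := by
  refine ⟨⟨(1, y), ?_⟩, ?_, connectedUnderAdj_of_forall_adj (m := (1, y)) (by simp [row]) ?_⟩
  · intro p hp
    simp only [row, Set.mem_insert_iff, Set.mem_singleton_iff] at hp
    rw [mem_xpent_iff]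
    rcases hp with rfl | rfl | rfl <;> norm_num
  · have : (row y).ncard = 3 :=
      Set.ncard_eq_three.2 ⟨(0, y), (1, y), (2, y), by simp, by simp, by simp, rfl⟩
    omega
  · intro p hp hpm
    simp only [row, Set.mem_insert_iff, Set.mem_singleton_iff] at hp
    rcases hp with rfl | rfl | rfl <;> simp_all [Adj]

def rowTiling : Finset (Set Cell) := ({0, 1, 2} : Finset ℤ).map ⟨row, row_injective⟩

lemma isFragmentTiling_rowTiling : IsFragmentTiling (Sq 3) rowTiling := by
  refine ⟨?_, ?_, ?_⟩
  · simp only [rowTiling, Finset.mem_map, Function.Embedding.coeFn_mk]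
    rintro _ ⟨y, -, rfl⟩
    exact isFragment_row y
  · simp only [rowTiling, Finset.mem_map, Function.Embedding.coeFn_mk]
    rintro _ ⟨y, -, rfl⟩ _ ⟨y', -, rfl⟩ hne
    refine Set.disjoint_left.2 fun p hp hp' => hne ?_
    simp only [row, Set.mem_insert_iff, Set.mem_singleton_iff] at hp hp'
    rcases hp with rfl | rfl | rfl <;> simp_all
  · ext ⟨x, y⟩
    simp only [rowTiling, Finset.map_insert, Finset.map_singleton, Function.Embedding.coeFn_mk,
      row, Finset.mem_insert, Finset.mem_singleton, Set.iUnion_iUnion_eq_or_left,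
      Set.iUnion_iUnion_eq_left, Set.union_insert, Set.union_singleton, Set.mem_insert_iff,
      Set.mem_singleton_iff, Prod.mk.injEq, Sq, Nat.cast_ofNat, Set.mem_ofPred_eq]
    omega

lemma card_rowTiling : rowTiling.card = 3 := by
  decide

def pinwheel : Finset (Finset Cell) :=
  {{(0,0), (1,0)}, {(0,0), (0,1)}, {(0,2), (1,2)}, {(1,1), (2,1)}, {(1,2), (2,2)}, {(2,0), (2,1)}}

lemma isSaturatedCovering_pinwheel : IsSaturatedCovering (Sq 3) pinwheel := by
  have hunion (D : Finset (Finset Cell)) : (⋃ e ∈ D, (e : Set Cell)) = ↑(D.biUnion id) := by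
    simp
  rw [← coe_sq3]
  refine ⟨⟨?_, ?_⟩, fun e he => ?_⟩
  · simp only [pinwheel, Finset.mem_insert, Finset.mem_singleton]
    rintro e (rfl | rfl | rfl | rfl | rfl | rfl) <;>
      exact ⟨_, _, by simp [sq3], by simp [sq3], by simp [Adj], rfl⟩
  · rw [hunion, Finset.coe_inj]
    decide
  · rw [hunion, Finset.coe_ssubset]
    revert e
    decide

lemma card_pinwheel : pinwheel.card = 6 := by
  decide

/-- `f(3) = 3` and `d(3) = 6` for the 3 × 3 board. -/
theorem fNum_dNum_3 : fNum (Sq 3) = 3 ∧ dNum (Sq 3) = 6 := by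
  refine ⟨IsLeast.csInf_eq ⟨⟨_, isFragmentTiling_rowTiling, card_rowTiling⟩, ?_⟩,
    IsGreatest.csSup_eq ⟨⟨_, isSaturatedCovering_pinwheel, card_pinwheel⟩, ?_⟩⟩
  · rintro k ⟨T, hT, rfl⟩
    exact xNum_sq_three ▸ hT.xNum_le_card
  · rintro k ⟨D, hD, rfl⟩
    have h := (coe_sq3 ▸ hD : IsSaturatedCovering sq3 D).card_add_xNum_le
    rw [coe_sq3, xNum_sq_three] at h
    exact Nat.le_of_add_le_add_right (h.trans_eq rfl)
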